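/- Let A₀ be a symmetric n×n real matrix with largest eigenvalue ρ₀, A₁ a symmetric m×m real matrix with constant row sum ρ₁ equal to its largest eigenvalue, and b > 0. Then the largest eigenvalue of the corona block matrix A = [[A₀, b J_{1,m} ⊗ I_n],[b J_{m,1} ⊗ I_n, A₁ ⊗ I_n]] equals (ρ₀ + ρ₁ + √((ρ₀ − ρ₁)² + 4 m b²))/2. -/

import Mathlib

/-!
Let `ρ` be the larger root of `(ρ - ρ0) (ρ - ρ1) = m b²`. If `A0 v = ρ0 v`, then because the rows
of `A1` all sum to `ρ1`, the vector `(m b v, (ρ - ρ0) (1 ⊗ v))` is an eigenvector of the corona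
matrix for `ρ`. Conversely, its Rayleigh quotient is at most `ρ`: write `x = (u, w)`. The
diagonal blocks contribute at most `ρ0 ‖u‖² + ρ1 ‖w‖²`. By Cauchy–Schwarz the cross term is at most
`2 |b| √(m ‖u‖² ‖w‖²) = 2 √((ρ - ρ0) ‖u‖² · (ρ - ρ1) ‖w‖²)`, and AM–GM bounds this by the slack
`(ρ - ρ0) ‖u‖² + (ρ - ρ1) ‖w‖²`.
-/

open Matrix Kronecker BigOperators

/-- The adjacency matrix of the corona product: blocks
`[[A₀, b·J_{1,m} ⊗ I_n],[b·J_{m,1} ⊗ I_n, A₁ ⊗ I_n]]`. -/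
noncomputable def coronaA (n m : ℕ) (A0 : Matrix (Fin n) (Fin n) ℝ)
    (A1 : Matrix (Fin m) (Fin m) ℝ) (b : ℝ) :
    Matrix (Fin n ⊕ Fin m × Fin n) (Fin n ⊕ Fin m × Fin n) ℝ :=
  Matrix.fromBlocks A0
    (Matrix.of fun i p => if p.2 = i then b else 0)
    (Matrix.of fun p i => if p.2 = i then b else 0)
    (A1 ⊗ₖ (1 : Matrix (Fin n) (Fin n) ℝ))

theorem Matrix.mem_spectrum_iff_exists_mulVec_eq_smul {K ι : Type*} [Field K] [Fintype ι]
    [DecidableEq ι] (A : Matrix ι ι K) (μ : K) :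
    μ ∈ spectrum K A ↔ ∃ v ≠ 0, A *ᵥ v = μ • v := by
  rw [← spectrum_toLin', ← Module.End.hasEigenvalue_iff_mem_spectrum,
    Module.End.hasEigenvalue_iff, Submodule.ne_bot_iff]
  simp [toLin'_apply, and_comm]

section RayleighBound

variable {ι : Type*} [Fintype ι] [DecidableEq ι] {A : Matrix ι ι ℝ} {ρ : ℝ}

theorem Matrix.IsSymm.dotProduct_mulVec_le (hA : A.IsSymm)
    (hρ : ρ ∈ upperBounds (spectrum ℝ A)) (x : ι → ℝ) : x ⬝ᵥ A *ᵥ x ≤ ρ * (x ⬝ᵥ x) := by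
  have hM : (algebraMap ℝ _ ρ - A).PosSemidef := by
    refine posSemidef_iff_isHermitian_and_spectrum_nonneg.mpr ⟨?_, ?_⟩
    · simpa [Algebra.algebraMap_eq_smul_one, IsSymm, transpose_sub] using hA.eq
    · rw [← spectrum.singleton_sub_eq]
      rintro _ ⟨_, rfl, μ, hμ, rfl⟩
      exact sub_nonneg.mpr (hρ hμ)
  simpa [Algebra.algebraMap_eq_smul_one, sub_mulVec, smul_mulVec, dotProduct_smul] using
    hM.dotProduct_mulVec_nonneg x

theorem Matrix.upperBounds_spectrum_of_dotProduct_mulVec_le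
    (h : ∀ x, x ⬝ᵥ A *ᵥ x ≤ ρ * (x ⬝ᵥ x)) : ρ ∈ upperBounds (spectrum ℝ A) := by
  intro μ hμ
  obtain ⟨v, hv0, hv⟩ := (mem_spectrum_iff_exists_mulVec_eq_smul A μ).mp hμ
  have hpos : 0 < v ⬝ᵥ v := by simpa using dotProduct_star_self_pos_iff.mpr hv0
  have hle := h v
  rw [hv, dotProduct_smul, smul_eq_mul] at hle
  exact le_of_mul_le_mul_right hle hpos

end RayleighBound

theorem dotProduct_eq_sum_dotProduct_fiber {R ι κ : Type*} [CommSemiring R] [Fintype ι]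
    [Fintype κ] (v w : κ × ι → R) :
    v ⬝ᵥ w = ∑ i, (fun j => v (j, i)) ⬝ᵥ fun j => w (j, i) := by
  simp only [dotProduct, Fintype.sum_prod_type]
  exact Finset.sum_comm

theorem sq_sum_mul_sum_le_card_mul {ι κ : Type*} [Fintype ι] [Fintype κ] (u : ι → ℝ)
    (w : κ × ι → ℝ) :
    (∑ i, u i * ∑ j, w (j, i)) ^ 2 ≤ Fintype.card κ * (u ⬝ᵥ u) * (w ⬝ᵥ w) := by
  calc (∑ i, u i * ∑ j, w (j, i)) ^ 2 ≤ (∑ i, u i ^ 2) * ∑ i, (∑ j, w (j, i)) ^ 2 :=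
        Finset.sum_mul_sq_le_sq_mul_sq _ _ _
    _ ≤ (∑ i, u i ^ 2) * ∑ i, Fintype.card κ * ∑ j, w (j, i) ^ 2 := by
        gcongr with i
        exact sq_sum_le_card_mul_sum_sq
    _ = Fintype.card κ * (u ⬝ᵥ u) * (w ⬝ᵥ w) := by
        rw [dotProduct_eq_sum_dotProduct_fiber w]
        simp only [dotProduct, ← Finset.mul_sum, sq]
        ring

theorem le_add_of_sq_le_four_mul {x y z : ℝ} (hx : 0 ≤ x) (hy : 0 ≤ y)
    (h : z ^ 2 ≤ 4 * x * y) : z ≤ x + y := by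
  nlinarith [sq_nonneg (x - y), sq_nonneg (z - x - y)]

theorem max_le_add_add_sqrt_div_two (a c d : ℝ) (hd : 0 ≤ d) :
    max a c ≤ (a + c + √((a - c) ^ 2 + d)) / 2 := by
  have := Real.abs_le_sqrt (le_add_of_nonneg_right hd : (a - c) ^ 2 ≤ (a - c) ^ 2 + d)
  rw [max_le_iff]
  constructor <;> linarith [abs_le.mp this]

theorem add_add_sqrt_div_two_sub_mul_sub (a c d : ℝ) (hd : 0 ≤ d) :
    ((a + c + √((a - c) ^ 2 + d)) / 2 - a) * ((a + c + √((a - c) ^ 2 + d)) / 2 - c) = d / 4 := by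
  linear_combination Real.sq_sqrt (add_nonneg (sq_nonneg (a - c)) hd) / 4

section Corona

variable {n m : ℕ} {A0 : Matrix (Fin n) (Fin n) ℝ} {A1 : Matrix (Fin m) (Fin m) ℝ} {b : ℝ}

theorem coronaA_mulVec_inl (u : Fin n → ℝ) (w : Fin m × Fin n → ℝ) (i : Fin n) :
    (coronaA n m A0 A1 b *ᵥ Sum.elim u w) (Sum.inl i) = (A0 *ᵥ u) i + b * ∑ j, w (j, i) := by
  simp [coronaA, mulVec, dotProduct, Fintype.sum_prod_type, Finset.mul_sum]

theorem coronaA_mulVec_inr (u : Fin n → ℝ) (w : Fin m × Fin n → ℝ) (j : Fin m) (i : Fin n) :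
    (coronaA n m A0 A1 b *ᵥ Sum.elim u w) (Sum.inr (j, i)) =
      b * u i + (A1 *ᵥ fun j' => w (j', i)) j := by
  simp [coronaA, mulVec, dotProduct, Fintype.sum_prod_type, one_apply]

theorem dotProduct_coronaA_mulVec (u : Fin n → ℝ) (w : Fin m × Fin n → ℝ) :
    Sum.elim u w ⬝ᵥ coronaA n m A0 A1 b *ᵥ Sum.elim u w =
      u ⬝ᵥ A0 *ᵥ u + 2 * b * ∑ i, u i * ∑ j, w (j, i) +
        ∑ i, (fun j => w (j, i)) ⬝ᵥ A1 *ᵥ fun j => w (j, i) := by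
  rw [dotProduct, Fintype.sum_sum_type]
  simp only [Sum.elim_inl, Sum.elim_inr, coronaA_mulVec_inl, coronaA_mulVec_inr,
    Fintype.sum_prod_type]
  rw [Finset.sum_comm (γ := Fin m)]
  simp only [dotProduct, mul_add, Finset.mul_sum, ← Finset.sum_add_distrib]
  refine Finset.sum_congr rfl fun i _ => ?_
  simp only [Finset.sum_add_distrib, ← Finset.mul_sum, ← Finset.sum_mul]
  ring

variable {ρ0 ρ1 ρ : ℝ}

theorem dotProduct_coronaA_mulVec_le (hA0 : ∀ u, u ⬝ᵥ A0 *ᵥ u ≤ ρ0 * (u ⬝ᵥ u))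
    (hA1 : ∀ v, v ⬝ᵥ A1 *ᵥ v ≤ ρ1 * (v ⬝ᵥ v)) (h0 : ρ0 ≤ ρ) (h1 : ρ1 ≤ ρ)
    (hρ : (ρ - ρ0) * (ρ - ρ1) = m * b ^ 2) (x : Fin n ⊕ Fin m × Fin n → ℝ) :
    x ⬝ᵥ coronaA n m A0 A1 b *ᵥ x ≤ ρ * (x ⬝ᵥ x) := by
  rw [← Sum.elim_comp_inl_inr x]
  generalize x ∘ Sum.inl = u, x ∘ Sum.inr = w
  have hcross :
      2 * b * ∑ i, u i * ∑ j, w (j, i) ≤ (ρ - ρ0) * (u ⬝ᵥ u) + (ρ - ρ1) * (w ⬝ᵥ w) := by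
    refine le_add_of_sq_le_four_mul
      (mul_nonneg (sub_nonneg.mpr h0) (dotProduct_star_self_nonneg u))
      (mul_nonneg (sub_nonneg.mpr h1) (dotProduct_star_self_nonneg w)) ?_
    calc (2 * b * ∑ i, u i * ∑ j, w (j, i)) ^ 2
        = 4 * b ^ 2 * (∑ i, u i * ∑ j, w (j, i)) ^ 2 := by ring
      _ ≤ 4 * b ^ 2 * (m * (u ⬝ᵥ u) * (w ⬝ᵥ w)) := by
        gcongr
        simpa using sq_sum_mul_sum_le_card_mul u w
      _ = 4 * ((ρ - ρ0) * (u ⬝ᵥ u)) * ((ρ - ρ1) * (w ⬝ᵥ w)) := by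
        linear_combination -4 * (u ⬝ᵥ u) * (w ⬝ᵥ w) * hρ
  have hfiber : ∑ i, (fun j => w (j, i)) ⬝ᵥ A1 *ᵥ (fun j => w (j, i)) ≤ ρ1 * (w ⬝ᵥ w) := by
    rw [dotProduct_eq_sum_dotProduct_fiber w, Finset.mul_sum]
    exact Finset.sum_le_sum fun i _ => hA1 _
  rw [dotProduct_coronaA_mulVec, sumElim_dotProduct_sumElim]
  linarith [hA0 u]

theorem coronaA_mulVec_eigenvector {v : Fin n → ℝ} (hv : A0 *ᵥ v = ρ0 • v)
    (hrow : A1 *ᵥ (fun _ => 1) = fun _ => ρ1) (hρ : (ρ - ρ0) * (ρ - ρ1) = m * b ^ 2) :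
    coronaA n m A0 A1 b *ᵥ Sum.elim ((m * b) • v) (fun p => (ρ - ρ0) * v p.2) =
      ρ • Sum.elim ((m * b) • v) (fun p => (ρ - ρ0) * v p.2) := by
  have hconst (c : ℝ) : A1 *ᵥ (fun _ => c) = fun _ => ρ1 * c := by
    have hc : (fun _ : Fin m => c) = c • fun _ => 1 := by ext; simp
    rw [hc, mulVec_smul, hrow]
    ext; simp [mul_comm]
  ext (i | ⟨j, i⟩)
  · simp only [Sum.elim_inl, Pi.smul_apply, smul_eq_mul, coronaA_mulVec_inl, mulVec_smul, hv,
      Finset.sum_const, Finset.card_univ, Fintype.card_fin, nsmul_eq_mul]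
    ring
  · simp only [Sum.elim_inr, Pi.smul_apply, smul_eq_mul, coronaA_mulVec_inr, hconst]
    linear_combination (-v i) * hρ

end Corona

theorem corona_spectral_radius (n m : ℕ) (A0 : Matrix (Fin n) (Fin n) ℝ) (hA0 : A0.IsSymm)
    (A1 : Matrix (Fin m) (Fin m) ℝ) (hA1 : A1.IsSymm) (ρ0 ρ1 b : ℝ) (hb : 0 < b)
    (h0 : IsGreatest (spectrum ℝ A0) ρ0)
    (hrow : A1.mulVec (fun _ => 1) = fun _ => ρ1)
    (h1 : IsGreatest (spectrum ℝ A1) ρ1) :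
    IsGreatest (spectrum ℝ (coronaA n m A0 A1 b))
      ((ρ0 + ρ1 + Real.sqrt ((ρ0 - ρ1) ^ 2 + 4 * m * b ^ 2)) / 2) := by
  have hd : 0 ≤ 4 * m * b ^ 2 := by positivity
  have hρ := add_add_sqrt_div_two_sub_mul_sub ρ0 ρ1 _ hd
  obtain ⟨hρ0, hρ1⟩ := max_le_iff.mp (max_le_add_add_sqrt_div_two ρ0 ρ1 _ hd)
  set ρ := (ρ0 + ρ1 + √((ρ0 - ρ1) ^ 2 + 4 * m * b ^ 2)) / 2
  replace hρ : (ρ - ρ0) * (ρ - ρ1) = m * b ^ 2 := by rw [hρ]; ring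
  obtain ⟨v, hv0, hv⟩ := (mem_spectrum_iff_exists_mulVec_eq_smul A0 ρ0).mp h0.1
  obtain ⟨v1, hv1, -⟩ := (mem_spectrum_iff_exists_mulVec_eq_smul A1 ρ1).mp h1.1
  obtain ⟨j, -⟩ := Function.ne_iff.mp hv1
  have hmb : (m * b : ℝ) ≠ 0 := mul_ne_zero (Nat.cast_ne_zero.mpr j.pos.ne') hb.ne'
  have heigen_ne : Sum.elim ((m * b) • v) (fun p : Fin m × Fin n => (ρ - ρ0) * v p.2) ≠ 0 :=
    fun h => hv0 (smul_right_injective _ hmb (by simpa using congrArg (· ∘ Sum.inl) h))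
  exact ⟨(mem_spectrum_iff_exists_mulVec_eq_smul _ ρ).mpr
      ⟨_, heigen_ne, coronaA_mulVec_eigenvector hv hrow hρ⟩,
    upperBounds_spectrum_of_dotProduct_mulVec_le (dotProduct_coronaA_mulVec_le
      (hA0.dotProduct_mulVec_le h0.2) (hA1.dotProduct_mulVec_le h1.2) hρ0 hρ1 hρ)⟩
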